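/- arXiv:2411.19923 — 6 statements merged into one kernel-verified Lean document; each statement's English description precedes it below -/
import Mathlib

section
/- Let n_z ≥ 1 and n_s ≥ n_z be natural numbers, let η ∈ (1/2, 1], and let 𝒳 be a nonempty set. Let p, q : 𝒳 → ℝ^{n_z} be functions such that p(x) and q(x) are probability vectors for every x ∈ 𝒳. Let M_P, M_Q ∈ ℝ^{n_z × n_s} be row-stochastic matrices, each of rank n_z. Assume: (i) M_P^⊤ p(x) = M_Q^⊤ q(x) for all x ∈ 𝒳 (the two models induce the same observed conditional distribution of the proxy given the covariates); (ii) weak overlap: for each i ∈ {1,…,n_z} there exists x ∈ 𝒳 with p_i(x) ≥ η, and there exists x ∈ 𝒳 with q_i(x) ≥ η. Then there exists a permutation π of {1,…,n_z} such that for every i ∈ {1,…,n_z} and every x ∈ 𝒳, |p_i(x) − q_{π(i)}(x)| ≤ (n_z + 3)·(1 − η)/(2η − 1). -/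
open Matrix Finset

lemma rank_transpose_mulVec_injective {n m : ℕ} (M : Matrix (Fin n) (Fin m) ℝ)
    (h : M.rank = n) : Function.Injective (Mᵀ.mulVec) := by
  have h1 : Mᵀ.rank = n := by rw [Matrix.rank_transpose]; exact h
  have h2 : LinearMap.ker (Mᵀ.mulVecLin) = ⊥ := by
    have hrn := LinearMap.finrank_range_add_finrank_ker (Mᵀ.mulVecLin)
    rw [Module.finrank_fintype_fun_eq_card, Fintype.card_fin] at hrn
    have : Module.finrank ℝ (LinearMap.range Mᵀ.mulVecLin) = n := h1
    rw [this] at hrn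
    have hk : Module.finrank ℝ (LinearMap.ker Mᵀ.mulVecLin) = 0 := by omega
    exact Submodule.finrank_eq_zero.mp hk
  have := LinearMap.ker_eq_bot.mp h2
  intro a b hab
  exact this (by simpa [Matrix.mulVecLin_apply, Matrix.mulVec_transpose] using hab)

lemma combo_close {n : ℕ} (βv uv w : Fin n → ℝ) (ρ : ℝ)
    (hw0 : ∀ k, 0 ≤ w k) (hw1 : ∀ k, w k ≤ 1)
    (hsum : ∑ k, βv k = ∑ k, uv k) (hnorm : ∑ k, |βv k - uv k| ≤ ρ) :
    ∑ k, βv k * w k ≤ (∑ k, uv k * w k) + ρ/2 := by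
  have key : ∀ k, βv k * w k ≤ uv k * w k + (|βv k - uv k| + (βv k - uv k))/2 := by
    intro k
    rcases le_total (βv k - uv k) 0 with h|h
    · rw [abs_of_nonpos h]
      have : (βv k - uv k) * w k ≤ 0 := mul_nonpos_of_nonpos_of_nonneg h (hw0 k)
      nlinarith
    · rw [abs_of_nonneg h]
      have : (βv k - uv k) * w k ≤ (βv k - uv k) * 1 := mul_le_mul_of_nonneg_left (hw1 k) h
      nlinarith
  calc ∑ k, βv k * w k
      ≤ ∑ k, (uv k * w k + (|βv k - uv k| + (βv k - uv k))/2) :=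
        Finset.sum_le_sum (fun k _ => key k)
    _ = (∑ k, uv k * w k) + ((∑ k, |βv k - uv k|) + ((∑ k, βv k) - (∑ k, uv k)))/2 := by
        rw [Finset.sum_add_distrib]
        congr 1
        rw [← Finset.sum_div, Finset.sum_add_distrib, Finset.sum_sub_distrib]
    _ ≤ (∑ k, uv k * w k) + ρ/2 := by
        rw [hsum]
        have : (∑ k, |βv k - uv k|) + ((∑ k, uv k) - (∑ k, uv k)) ≤ ρ := by
          simpa using hnorm
        linarith

lemma solve_dd {n : ℕ} (η : ℝ) (hη : 1/2 < η) (hη2 : η ≤ 1)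
    (P : Matrix (Fin n) (Fin n) ℝ)
    (hnn : ∀ k j, 0 ≤ P k j) (hrow : ∀ k, ∑ j, P k j = 1)
    (hdiag : ∀ k, η ≤ P k k)
    (u : Fin n → ℝ) (hu_nn : ∀ j, 0 ≤ u j) (hu : ∑ j, u j = 1) :
    ∃ b : Fin n → ℝ, (∀ j, ∑ k, b k * P k j = u j) ∧ (∑ k, b k = 1) ∧
      (∑ k, |b k - u k|) ≤ 2*(1-η)/(2*η-1) := by
  have hd : (0:ℝ) < 2*η - 1 := by linarith
  have hoff : ∀ k, ∑ j ∈ univ.erase k, P k j ≤ 1 - η := by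
    intro k
    have h1 := hrow k
    have h2 : P k k + ∑ j ∈ univ.erase k, P k j = 1 := by
      rw [Finset.add_sum_erase univ _ (mem_univ k)]; exact h1
    have := hdiag k; linarith
  have hker : ∀ v : Fin n → ℝ, P *ᵥ v = 0 → v = 0 := by
    intro v hv
    by_contra hne
    have hex : ∃ k, v k ≠ 0 := by
      by_contra hc; push_neg at hc; exact hne (funext hc)
    obtain ⟨k0, hk0⟩ := hex
    obtain ⟨ks, -, hks⟩ := Finset.exists_max_image univ (fun k => |v k|) ⟨k0, mem_univ k0⟩
    have hkspos : 0 < |v ks| := lt_of_lt_of_le (abs_pos.mpr hk0) (hks k0 (mem_univ k0))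
    have h0 : ∑ j, P ks j * v j = 0 := by
      have := congrFun hv ks
      simpa [Matrix.mulVec, dotProduct] using this
    have hsplit : P ks ks * v ks = -∑ j ∈ univ.erase ks, P ks j * v j := by
      have : P ks ks * v ks + ∑ j ∈ univ.erase ks, P ks j * v j = 0 := by
        rw [Finset.add_sum_erase univ (fun j => P ks j * v j) (mem_univ ks)]; exact h0
      linarith
    have habs : η * |v ks| ≤ (1 - η) * |v ks| := by
      have h1 : η * |v ks| ≤ |P ks ks * v ks| := by
        rw [abs_mul, abs_of_nonneg (hnn ks ks)]
        exact mul_le_mul_of_nonneg_right (hdiag ks) (abs_nonneg _)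
      have h2 : |∑ j ∈ univ.erase ks, P ks j * v j| ≤ (1 - η) * |v ks| := by
        calc |∑ j ∈ univ.erase ks, P ks j * v j| ≤ ∑ j ∈ univ.erase ks, |P ks j * v j| :=
              Finset.abs_sum_le_sum_abs _ _
          _ ≤ ∑ j ∈ univ.erase ks, P ks j * |v ks| := by
              apply Finset.sum_le_sum
              intro j hj
              rw [abs_mul, abs_of_nonneg (hnn ks j)]
              exact mul_le_mul_of_nonneg_left (hks j (mem_univ j)) (hnn ks j)
          _ = (∑ j ∈ univ.erase ks, P ks j) * |v ks| := by rw [Finset.sum_mul]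
          _ ≤ (1 - η) * |v ks| := mul_le_mul_of_nonneg_right (hoff ks) (abs_nonneg _)
      rw [hsplit, abs_neg] at h1
      linarith
    nlinarith
  have hinj : Function.Injective P.mulVec := by
    intro a b hab
    have h0 : P *ᵥ (a - b) = 0 := by rw [Matrix.mulVec_sub, hab, sub_self]
    have := hker _ h0
    ext i; have := congrFun this i; simp at this; linarith [this]
  have hunit : IsUnit P := Matrix.mulVec_injective_iff_isUnit.mp hinj
  have hunitdet : IsUnit P.det := (Matrix.isUnit_iff_isUnit_det _).mp hunit
  have hunitdetT : IsUnit (Pᵀ).det := by rw [Matrix.det_transpose]; exact hunitdet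
  set b := (Pᵀ)⁻¹ *ᵥ u with hbdef
  have hb : Pᵀ *ᵥ b = u := by
    rw [hbdef, Matrix.mulVec_mulVec, Matrix.mul_nonsing_inv _ hunitdetT, Matrix.one_mulVec]
  have heq : ∀ j, ∑ k, b k * P k j = u j := by
    intro j
    have := congrFun hb j
    simpa [Matrix.mulVec, dotProduct, Matrix.transpose_apply, mul_comm] using this
  have hsumb : ∑ k, b k = 1 := by
    have h1 : ∑ j, ∑ k, b k * P k j = 1 := by
      rw [← hu]; exact Finset.sum_congr rfl fun j _ => heq j
    rw [Finset.sum_comm] at h1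
    calc ∑ k, b k = ∑ k, b k * ∑ j, P k j := by
          apply Finset.sum_congr rfl; intro k _; rw [hrow k, mul_one]
      _ = ∑ k, ∑ j, b k * P k j := by
          apply Finset.sum_congr rfl; intro k _; rw [Finset.mul_sum]
      _ = 1 := h1
  refine ⟨b, heq, hsumb, ?_⟩
  have key : ∀ j, b j - u j = ∑ k, b k * ((if k = j then (1:ℝ) else 0) - P k j) := by
    intro j
    have h1 : ∑ k, b k * (if k = j then (1:ℝ) else 0) = b j := by
      simp [mul_ite]
    have h2 : ∑ k, b k * ((if k = j then (1:ℝ) else 0) - P k j)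
        = (∑ k, b k * (if k = j then (1:ℝ) else 0)) - ∑ k, b k * P k j := by
      rw [← Finset.sum_sub_distrib]
      apply Finset.sum_congr rfl; intro k _; ring
    rw [h2, h1, heq j]
  have hPle1 : ∀ k j, P k j ≤ 1 := by
    intro k j
    have h1 : P k j + ∑ l ∈ univ.erase j, P k l = 1 := by
      rw [Finset.add_sum_erase univ (fun l => P k l) (mem_univ j)]; exact hrow k
    have h2 : 0 ≤ ∑ l ∈ univ.erase j, P k l := Finset.sum_nonneg fun l _ => hnn k l
    linarith
  have hcol : ∀ k, ∑ j, |(if k = j then (1:ℝ) else 0) - P k j| ≤ 2*(1-η) := by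
    intro k
    have hsplit : ∑ j, |(if k = j then (1:ℝ) else 0) - P k j|
        = |1 - P k k| + ∑ j ∈ univ.erase k, |(if k = j then (1:ℝ) else 0) - P k j| := by
      rw [← Finset.add_sum_erase univ (fun j => |(if k = j then (1:ℝ) else 0) - P k j|) (mem_univ k)]
      simp
    rw [hsplit]
    have h1 : |1 - P k k| = 1 - P k k := abs_of_nonneg (by linarith [hPle1 k k])
    have h2 : ∑ j ∈ univ.erase k, |(if k = j then (1:ℝ) else 0) - P k j|
        = ∑ j ∈ univ.erase k, P k j := by
      apply Finset.sum_congr rfl; intro j hj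
      have hne : k ≠ j := fun h => (Finset.mem_erase.mp hj).1 h.symm
      rw [if_neg hne]
      rw [abs_of_nonpos (by linarith [hnn k j])]; ring
    rw [h1, h2]
    have := hoff k
    have := hdiag k
    linarith
  set t := ∑ k, |b k - u k| with htdef
  have habs : t ≤ 2*(1-η) * (t + 1) := by
    have step1 : t ≤ ∑ j, ∑ k, |b k| * |(if k = j then (1:ℝ) else 0) - P k j| := by
      apply Finset.sum_le_sum
      intro j _
      rw [key j]
      calc |∑ k, b k * ((if k = j then (1:ℝ) else 0) - P k j)|
          ≤ ∑ k, |b k * ((if k = j then (1:ℝ) else 0) - P k j)| := Finset.abs_sum_le_sum_abs _ _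
        _ = ∑ k, |b k| * |(if k = j then (1:ℝ) else 0) - P k j| := by
            apply Finset.sum_congr rfl; intro k _; rw [abs_mul]
    have step2 : ∑ j, ∑ k, |b k| * |(if k = j then (1:ℝ) else 0) - P k j|
        = ∑ k, |b k| * ∑ j, |(if k = j then (1:ℝ) else 0) - P k j| := by
      rw [Finset.sum_comm]
      apply Finset.sum_congr rfl; intro k _; rw [Finset.mul_sum]
    have step3 : ∑ k, |b k| * ∑ j, |(if k = j then (1:ℝ) else 0) - P k j|
        ≤ ∑ k, |b k| * (2*(1-η)) := by
      apply Finset.sum_le_sum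
      intro k _
      exact mul_le_mul_of_nonneg_left (hcol k) (abs_nonneg _)
    have step4 : ∑ k, |b k| * (2*(1-η)) = (2*(1-η)) * ∑ k, |b k| := by
      rw [← Finset.sum_mul]; ring
    have step5 : ∑ k, |b k| ≤ t + 1 := by
      rw [htdef, ← hu]
      rw [← Finset.sum_add_distrib]
      apply Finset.sum_le_sum
      intro k _
      calc |b k| = |(b k - u k) + u k| := by ring_nf
        _ ≤ |b k - u k| + |u k| := abs_add_le _ _
        _ = |b k - u k| + u k := by rw [abs_of_nonneg (hu_nn k)]
    have hnn2 : (0:ℝ) ≤ 2*(1-η) := by linarith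
    calc t ≤ (2*(1-η)) * ∑ k, |b k| := by
          rw [← step4]; exact le_trans step1 (le_of_le_of_eq (le_trans (le_of_eq step2) step3) rfl)
      _ ≤ (2*(1-η)) * (t + 1) := mul_le_mul_of_nonneg_left step5 hnn2
  rw [le_div_iff₀ hd]
  linarith

lemma transfer_combo {n_z n_s : ℕ} {𝒳 : Type*}
    (p q : 𝒳 → Fin n_z → ℝ)
    (MP MQ : Matrix (Fin n_z) (Fin n_s) ℝ)
    (hinjQ : Function.Injective (MQᵀ.mulVec))
    (hobs : ∀ x, MPᵀ *ᵥ p x = MQᵀ *ᵥ q x)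
    (b : Fin n_z → ℝ) (z : 𝒳) (zs : Fin n_z → 𝒳)
    (h : ∀ i, p z i = ∑ k, b k * p (zs k) i) :
    ∀ j, q z j = ∑ k, b k * q (zs k) j := by
  have key : MQᵀ *ᵥ q z = MQᵀ *ᵥ (fun j => ∑ k, b k * q (zs k) j) := by
    ext s
    have lhs : (MQᵀ *ᵥ q z) s = (MPᵀ *ᵥ p z) s := by rw [hobs z]
    have expand : (MPᵀ *ᵥ p z) s = ∑ k, b k * (MPᵀ *ᵥ p (zs k)) s := by
      simp only [Matrix.mulVec, dotProduct, Matrix.transpose_apply]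
      calc ∑ i, MP i s * p z i = ∑ i, MP i s * ∑ k, b k * p (zs k) i := by
            apply Finset.sum_congr rfl; intro i _; rw [← h i]
        _ = ∑ i, ∑ k, b k * (MP i s * p (zs k) i) := by
            apply Finset.sum_congr rfl; intro i _; rw [Finset.mul_sum]
            apply Finset.sum_congr rfl; intro k _; ring
        _ = ∑ k, ∑ i, b k * (MP i s * p (zs k) i) := Finset.sum_comm
        _ = ∑ k, b k * ∑ i, MP i s * p (zs k) i := by
            apply Finset.sum_congr rfl; intro k _; rw [Finset.mul_sum]
    have rhs : (MQᵀ *ᵥ (fun j => ∑ k, b k * q (zs k) j)) s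
        = ∑ k, b k * (MQᵀ *ᵥ q (zs k)) s := by
      simp only [Matrix.mulVec, dotProduct, Matrix.transpose_apply]
      calc ∑ j, MQ j s * ∑ k, b k * q (zs k) j
          = ∑ j, ∑ k, b k * (MQ j s * q (zs k) j) := by
            apply Finset.sum_congr rfl; intro j _; rw [Finset.mul_sum]
            apply Finset.sum_congr rfl; intro k _; ring
        _ = ∑ k, ∑ j, b k * (MQ j s * q (zs k) j) := Finset.sum_comm
        _ = ∑ k, b k * ∑ j, MQ j s * q (zs k) j := by
            apply Finset.sum_congr rfl; intro k _; rw [Finset.mul_sum]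
    rw [lhs, expand, rhs]
    apply Finset.sum_congr rfl; intro k _
    rw [hobs (zs k)]
  have := hinjQ key
  intro j; exact congrFun this j

set_option maxHeartbeats 1000000 in
/-- **Theorem 1 (Approximate identifiability of latent variables).**
If two latent-variable models `(p, M_P)` and `(q, M_Q)` induce the same observed
conditional distribution of the proxy given the covariates, and both satisfy the
weak overlap assumption with parameter `η ∈ (1/2, 1]`, then their posteriors agree
up to a permutation of latent classes, within error `(n_z + 3)(1 - η)/(2η - 1)`. -/
theorem approximate_identifiability
    (n_z n_s : ℕ) (hnz : 1 ≤ n_z) (hns : n_z ≤ n_s)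
    (η : ℝ) (hη1 : 1 / 2 < η) (hη2 : η ≤ 1)
    (𝒳 : Type*) [Nonempty 𝒳]
    (p q : 𝒳 → Fin n_z → ℝ)
    (hp_nonneg : ∀ x i, 0 ≤ p x i) (hp_sum : ∀ x, ∑ i, p x i = 1)
    (hq_nonneg : ∀ x i, 0 ≤ q x i) (hq_sum : ∀ x, ∑ i, q x i = 1)
    (MP MQ : Matrix (Fin n_z) (Fin n_s) ℝ)
    (hMP_nonneg : ∀ z s, 0 ≤ MP z s) (hMP_rowsum : ∀ z, ∑ s, MP z s = 1)
    (hMQ_nonneg : ∀ z s, 0 ≤ MQ z s) (hMQ_rowsum : ∀ z, ∑ s, MQ z s = 1)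
    (hMP_rank : MP.rank = n_z) (hMQ_rank : MQ.rank = n_z)
    (hobs : ∀ x, MP.transpose *ᵥ p x = MQ.transpose *ᵥ q x)
    (hoverlap_p : ∀ i, ∃ x, η ≤ p x i)
    (hoverlap_q : ∀ i, ∃ x, η ≤ q x i) :
    ∃ π : Equiv.Perm (Fin n_z), ∀ i : Fin n_z, ∀ x : 𝒳,
      |p x i - q x (π i)| ≤ ((n_z : ℝ) + 3) * (1 - η) / (2 * η - 1) := by
  have hd : (0:ℝ) < 2*η - 1 := by linarith
  have hε : (0:ℝ) ≤ 1 - η := by linarith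
  have hp_le1 : ∀ x i, p x i ≤ 1 := by
    intro x i
    rw [← hp_sum x]
    exact Finset.single_le_sum (fun j _ => hp_nonneg x j) (mem_univ i)
  have hq_le1 : ∀ x i, q x i ≤ 1 := by
    intro x i
    rw [← hq_sum x]
    exact Finset.single_le_sum (fun j _ => hq_nonneg x j) (mem_univ i)
  by_cases htriv : 1 ≤ ((n_z:ℝ)+3) * (1-η) / (2*η-1)
  · refine ⟨Equiv.refl _, fun i x => ?_⟩
    have h1 : |p x i - q x i| ≤ 1 := by
      rw [abs_sub_le_iff]
      constructor <;> [linarith [hp_le1 x i, hq_nonneg x i]; linarith [hq_le1 x i, hp_nonneg x i]]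
    simpa using le_trans h1 htriv
  push_neg at htriv
  have hhard : ((n_z:ℝ)+3) * (1-η) < 2*η - 1 := by
    rw [div_lt_one hd] at htriv; exact htriv
  rcases eq_or_lt_of_le hnz with h1 | hnz2
  · -- n_z = 1 : trivial
    refine ⟨Equiv.refl _, fun i x => ?_⟩
    subst h1
    have hp1 : p x i = 1 := by
      have := hp_sum x
      rw [Fin.sum_univ_one] at this
      rw [Fin.eq_zero i]; exact this
    have hq1 : q x i = 1 := by
      have := hq_sum x
      rw [Fin.sum_univ_one] at this
      rw [Fin.eq_zero i]; exact this
    simp only [Equiv.refl_apply, hp1, hq1, sub_self, abs_zero]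
    positivity
  -- main case : n_z ≥ 2
  have hN2 : (2:ℝ) ≤ (n_z:ℝ) := by exact_mod_cast hnz2
  set τ : ℝ := 1 - η + (1-η)/(2*η-1) with hτdef
  clear_value τ
  have hhalf : (2*(1-η)/(2*η-1))/2 = (1-η)/(2*η-1) := by ring
  have hρnn : (0:ℝ) ≤ (1-η)/(2*η-1) := div_nonneg hε hd.le
  have hτnn : 0 ≤ τ := by rw [hτdef]; linarith
  have hτε : 1 - η ≤ τ := by rw [hτdef]; linarith
  have h5 : 5*(1-η) < 2*η - 1 := by nlinarith
  have hdivlt : (1-η)/(2*η-1) < 1/5 := by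
    rw [div_lt_iff₀ hd]; linarith
  have hτhalf : τ < 1/2 := by
    rw [hτdef]
    have : 1 - η < 1/5 := by linarith
    linarith
  choose xp hxp using hoverlap_p
  choose yq hyq using hoverlap_q
  have hinjP := rank_transpose_mulVec_injective MP hMP_rank
  have hinjQ := rank_transpose_mulVec_injective MQ hMQ_rank
  have pair_le : ∀ (v : Fin n_z → ℝ), (∀ k, 0 ≤ v k) → (∑ k, v k = 1) →
      ∀ a b : Fin n_z, a ≠ b → v a + v b ≤ 1 := by
    intro v hv0 hv1 a b hab
    have h0 : ∑ k ∈ ({a, b} : Finset (Fin n_z)), v k ≤ ∑ k, v k :=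
      Finset.sum_le_sum_of_subset_of_nonneg (subset_univ _) (fun k _ _ => hv0 k)
    rw [Finset.sum_pair hab] at h0
    linarith
  -- E1
  have E1 : ∀ i, 1 - τ ≤ ∑ j, q (xp i) j * p (yq j) i := by
    intro i
    obtain ⟨β, hβeq, hβsum, hβnorm⟩ := solve_dd η hη1 hη2
      (Matrix.of fun j l => q (yq j) l)
      (fun j l => hq_nonneg _ _) (fun j => hq_sum _) (fun j => hyq j)
      (q (xp i)) (fun l => hq_nonneg _ _) (hq_sum _)
    have hqeq : ∀ l, q (xp i) l = ∑ j, β j * q (yq j) l := fun l => (hβeq l).symm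
    have hpeq := transfer_combo q p MQ MP hinjP (fun x => (hobs x).symm) β (xp i) yq hqeq
    have h1 : η ≤ ∑ j, β j * p (yq j) i := by rw [← hpeq i]; exact hxp i
    have h2 : ∑ j, β j * p (yq j) i
        ≤ (∑ j, q (xp i) j * p (yq j) i) + (2*(1-η)/(2*η-1))/2 := by
      apply combo_close β (q (xp i)) (fun j => p (yq j) i) _
        (fun j => hp_nonneg _ _) (fun j => hp_le1 _ _) _ hβnorm
      rw [hβsum]; exact (hq_sum _).symm
    rw [hτdef]
    linarith [hhalf]
  -- E2
  have E2 : ∀ j, 1 - τ ≤ ∑ k, p (yq j) k * q (xp k) j := by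
    intro j
    obtain ⟨b, hbeq, hbsum, hbnorm⟩ := solve_dd η hη1 hη2
      (Matrix.of fun k l => p (xp k) l)
      (fun k l => hp_nonneg _ _) (fun k => hp_sum _) (fun k => hxp k)
      (p (yq j)) (fun l => hp_nonneg _ _) (hp_sum _)
    have hpeq : ∀ l, p (yq j) l = ∑ k, b k * p (xp k) l := fun l => (hbeq l).symm
    have hqeq := transfer_combo p q MP MQ hinjQ hobs b (yq j) xp hpeq
    have h1 : η ≤ ∑ k, b k * q (xp k) j := by rw [← hqeq j]; exact hyq j
    have h2 : ∑ k, b k * q (xp k) j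
        ≤ (∑ k, p (yq j) k * q (xp k) j) + (2*(1-η)/(2*η-1))/2 := by
      apply combo_close b (p (yq j)) (fun k => q (xp k) j) _
        (fun k => hq_nonneg _ _) (fun k => hq_le1 _ _) _ hbnorm
      rw [hbsum]; exact (hp_sum _).symm
    rw [hτdef]
    linarith [hhalf]
  -- define the permutation
  have hπex : ∀ i, ∃ j, 1 - τ ≤ p (yq j) i := by
    intro i
    by_contra hc
    push_neg at hc
    have hex : ∃ j0, 0 < q (xp i) j0 := by
      by_contra hc2
      push_neg at hc2
      have : ∑ j, q (xp i) j = 0 := le_antisymm (Finset.sum_nonpos fun j _ => hc2 j)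
        (Finset.sum_nonneg fun j _ => hq_nonneg _ _)
      rw [hq_sum] at this; norm_num at this
    obtain ⟨j0, hj0⟩ := hex
    have hlt : ∑ j, q (xp i) j * p (yq j) i < ∑ j, q (xp i) j * (1 - τ) := by
      apply Finset.sum_lt_sum
      · intro j _
        exact mul_le_mul_of_nonneg_left (le_of_lt (hc j)) (hq_nonneg _ _)
      · exact ⟨j0, mem_univ j0, mul_lt_mul_of_pos_left (hc j0) hj0⟩
    rw [← Finset.sum_mul, hq_sum, one_mul] at hlt
    linarith [E1 i]
  choose f hf using hπex
  have hfinj : Function.Injective f := by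
    intro a b hab
    by_contra hne
    have h1 := hf a
    have h2 := hf b
    rw [hab] at h1
    have := pair_le (p (yq (f b))) (fun k => hp_nonneg _ _) (hp_sum _) a b hne
    nlinarith [h1, h2, this, hτhalf]
  have hbij := Finite.injective_iff_bijective.mp hfinj
  refine ⟨Equiv.ofBijective f hbij, ?_⟩
  have E3 : ∀ i, 1 - 2*τ ≤ q (xp i) (f i) := by
    intro i
    have h2 := E2 (f i)
    have e1 : ∑ k, p (yq (f i)) k * q (xp k) (f i)
        = p (yq (f i)) i * q (xp i) (f i)
          + ∑ k ∈ univ.erase i, p (yq (f i)) k * q (xp k) (f i) := by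
      rw [Finset.add_sum_erase univ (fun k => p (yq (f i)) k * q (xp k) (f i)) (mem_univ i)]
    have e2 : ∑ k ∈ univ.erase i, p (yq (f i)) k * q (xp k) (f i)
        ≤ ∑ k ∈ univ.erase i, p (yq (f i)) k := by
      apply Finset.sum_le_sum
      intro k _
      exact mul_le_of_le_one_right (hp_nonneg _ _) (hq_le1 _ _)
    have e3 : ∑ k ∈ univ.erase i, p (yq (f i)) k = 1 - p (yq (f i)) i := by
      rw [Finset.sum_erase_eq_sub (mem_univ i), hp_sum]
    have e4 : p (yq (f i)) i * q (xp i) (f i) ≤ q (xp i) (f i) :=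
      mul_le_of_le_one_left (hq_nonneg _ _) (hp_le1 _ _)
    have e5 := hf i
    linarith
  intro i x
  -- entrywise bounds
  have hΔ : ∀ k, |q (xp k) (f i) - p (xp k) i| ≤ 2*τ := by
    intro k
    rcases eq_or_ne k i with rfl | hki
    · rw [abs_sub_le_iff]
      constructor
      · have := hq_le1 (xp k) (f k); have := hxp k; linarith
      · have := E3 k; have := hp_le1 (xp k) k; linarith
    · have hfi : f k ≠ f i := fun h => hki (hfinj h)
      have hq2 : q (xp k) (f i) ≤ 2*τ := by
        have := pair_le (q (xp k)) (fun l => hq_nonneg _ _) (hq_sum _) (f i) (f k) (Ne.symm hfi)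
        have := E3 k
        linarith
      have hp2 : p (xp k) i ≤ 1 - η := by
        have := pair_le (p (xp k)) (fun l => hp_nonneg _ _) (hp_sum _) i k (Ne.symm hki)
        have := hxp k
        linarith
      rw [abs_sub_le_iff]
      constructor
      · have := hp_nonneg (xp k) i; linarith
      · have := hq_nonneg (xp k) (f i); linarith
  obtain ⟨b, hbeq, hbsum, hbnorm⟩ := solve_dd η hη1 hη2
    (Matrix.of fun k l => p (xp k) l)
    (fun k l => hp_nonneg _ _) (fun k => hp_sum _) (fun k => hxp k)
    (p x) (fun l => hp_nonneg _ _) (hp_sum _)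
  have hpeq : ∀ l, p x l = ∑ k, b k * p (xp k) l := fun l => (hbeq l).symm
  have hqeq := transfer_combo p q MP MQ hinjQ hobs b x xp hpeq
  have hdiff : q x (f i) - p x i = ∑ k, b k * (q (xp k) (f i) - p (xp k) i) := by
    rw [hqeq (f i), hpeq i, ← Finset.sum_sub_distrib]
    apply Finset.sum_congr rfl; intro k _; ring
  have hsplitb : ∑ k, b k * (q (xp k) (f i) - p (xp k) i)
      = (∑ k, p x k * (q (xp k) (f i) - p (xp k) i))
        + ∑ k, (b k - p x k) * (q (xp k) (f i) - p (xp k) i) := by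
    rw [← Finset.sum_add_distrib]
    apply Finset.sum_congr rfl; intro k _; ring
  have hbnd1 : |∑ k, p x k * (q (xp k) (f i) - p (xp k) i)| ≤ 2*τ := by
    calc |∑ k, p x k * (q (xp k) (f i) - p (xp k) i)|
        ≤ ∑ k, |p x k * (q (xp k) (f i) - p (xp k) i)| := Finset.abs_sum_le_sum_abs _ _
      _ ≤ ∑ k, p x k * (2*τ) := by
          apply Finset.sum_le_sum
          intro k _
          rw [abs_mul, abs_of_nonneg (hp_nonneg x k)]
          exact mul_le_mul_of_nonneg_left (hΔ k) (hp_nonneg x k)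
      _ = (∑ k, p x k) * (2*τ) := by rw [Finset.sum_mul]
      _ = 2*τ := by rw [hp_sum x, one_mul]
  have hbnd2 : |∑ k, (b k - p x k) * (q (xp k) (f i) - p (xp k) i)|
      ≤ (2*(1-η)/(2*η-1)) * (2*τ) := by
    calc |∑ k, (b k - p x k) * (q (xp k) (f i) - p (xp k) i)|
        ≤ ∑ k, |(b k - p x k) * (q (xp k) (f i) - p (xp k) i)| := Finset.abs_sum_le_sum_abs _ _
      _ ≤ ∑ k, |b k - p x k| * (2*τ) := by
          apply Finset.sum_le_sum
          intro k _
          rw [abs_mul]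
          exact mul_le_mul_of_nonneg_left (hΔ k) (abs_nonneg _)
      _ = (∑ k, |b k - p x k|) * (2*τ) := by rw [Finset.sum_mul]
      _ ≤ (2*(1-η)/(2*η-1)) * (2*τ) := by
          apply mul_le_mul_of_nonneg_right hbnorm (by linarith)
  have htotal : |q x (f i) - p x i| ≤ 2*τ + (2*(1-η)/(2*η-1)) * (2*τ) := by
    rw [hdiff, hsplitb]
    calc |(∑ k, p x k * (q (xp k) (f i) - p (xp k) i))
        + ∑ k, (b k - p x k) * (q (xp k) (f i) - p (xp k) i)|
        ≤ |∑ k, p x k * (q (xp k) (f i) - p (xp k) i)|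
          + |∑ k, (b k - p x k) * (q (xp k) (f i) - p (xp k) i)| := abs_add_le _ _
      _ ≤ 2*τ + (2*(1-η)/(2*η-1)) * (2*τ) := add_le_add hbnd1 hbnd2
  -- final arithmetic
  have hfinal : 2*τ + (2*(1-η)/(2*η-1)) * (2*τ) ≤ ((n_z:ℝ)+3) * (1-η) / (2*η-1) := by
    have hεs : 0 ≤ (1-η) * ((2*η-1) - ((n_z:ℝ)+3)*(1-η)) := mul_nonneg hε (by linarith)
    have hint1 : 0 ≤ ((n_z:ℝ) - 1) * ((1-η) * ((2*η-1) - ((n_z:ℝ)+3)*(1-η))) :=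
      mul_nonneg (by linarith) hεs
    have hint2 : 0 ≤ ((1-η)*(1-η)) * ((n_z:ℝ)*(n_z:ℝ) + 2*(n_z:ℝ) - 7) :=
      mul_nonneg (mul_nonneg hε hε) (by nlinarith)
    have hmain : 4*η*(1-η) ≤ ((n_z:ℝ)+3)*(1-η)*(2*η-1) := by nlinarith [hint1, hint2]
    have hdd : 0 < (2*η-1)*(2*η-1) := mul_pos hd hd
    have key1 : (2*τ + (2*(1-η)/(2*η-1)) * (2*τ)) * ((2*η-1)*(2*η-1)) = 4*η*(1-η) := by
      rw [hτdef]; field_simp; ring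
    have key2 : (((n_z:ℝ)+3) * (1-η) / (2*η-1)) * ((2*η-1)*(2*η-1))
        = ((n_z:ℝ)+3)*(1-η)*(2*η-1) := by field_simp
    have := hmain
    rw [← key1, ← key2] at this
    exact le_of_mul_le_mul_right this hdd
  have hπi : (Equiv.ofBijective f hbij) i = f i := rfl
  rw [hπi, abs_sub_comm]
  exact le_trans htotal hfinal
end

section
/- Let n_z ≥ 1 and n_s ≥ n_z be natural numbers and let 𝒳 be a nonempty set. Let p, q : 𝒳 → ℝ^{n_z} be functions such that p(x) and q(x) are probability vectors for every x ∈ 𝒳. Let M_P, M_Q ∈ ℝ^{n_z × n_s} be row-stochastic matrices, each of rank n_z. Assume: (i) M_P^⊤ p(x) = M_Q^⊤ q(x) for all x ∈ 𝒳; (ii) for each i ∈ {1,…,n_z} there exists x ∈ 𝒳 with p_i(x) = 1, and there exists x ∈ 𝒳 with q_i(x) = 1. Then there exists a permutation π of {1,…,n_z} such that for every i ∈ {1,…,n_z} and every x ∈ 𝒳, p_i(x) = q_{π(i)}(x). -/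
/-!
Pick points `xp i`, `xq j` at which `p`, resp. `q`, is the vertex `e_i`, resp. `e_j`. Since
`v ↦ M_Pᵀ v` is injective and `M_Qᵀ e_j = M_Pᵀ p(xq j)`, every `p x` is the mixture
`∑ j, q_j(x) • p(xq j)`. At `x = xp i` this writes the vertex `e_i` as a convex combination of the
probability vectors `p(xq j)`, so one of them is `e_i`. The resulting map `i ↦ j` is injective,
hence a permutation `π` with `p(xq (π i)) = e_i`, and the mixture formula becomes
`p x i = q x (π i)`.
-/

open Matrix

theorem Matrix.vecMul_injective_of_rank_eq_card {K m n : Type*} [Field K] [Fintype m] [Fintype n]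
    {M : Matrix m n K} (h : M.rank = Fintype.card m) : Function.Injective M.vecMul := by
  rw [vecMul_injective_iff, linearIndependent_iff_card_eq_finrank_span, Set.finrank,
    ← rank_eq_finrank_span_row, h]

section stdSimplex

variable {𝕜 ι : Type*} [CommRing 𝕜] [LinearOrder 𝕜] [IsStrictOrderedRing 𝕜] [Fintype ι]

theorem eq_single_of_mem_stdSimplex_of_apply_eq_one [DecidableEq ι] {v : ι → 𝕜}
    (hv : v ∈ stdSimplex 𝕜 ι) {i : ι} (hi : v i = 1) : v = Pi.single i 1 := by
  have hrest : ∑ j ∈ Finset.univ.erase i, v j = 0 := by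
    have := Finset.add_sum_erase _ v (Finset.mem_univ i)
    rw [hv.2, hi] at this
    linarith
  ext j
  by_cases hji : j = i
  · simp [hji, hi]
  · rw [Pi.single_eq_of_ne hji]
    exact (Finset.sum_eq_zero_iff_of_nonneg fun k _ ↦ hv.1 k).mp hrest j
      (Finset.mem_erase.mpr ⟨hji, Finset.mem_univ j⟩)

theorem exists_eq_one_of_sum_mul_eq_one {w a : ι → 𝕜} (hw : w ∈ stdSimplex 𝕜 ι)
    (ha : ∀ j, a j ≤ 1) (h : ∑ j, w j * a j = 1) : ∃ j, a j = 1 := by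
  by_contra! hne
  obtain ⟨j₀, -, hj₀⟩ := Finset.exists_lt_of_sum_lt (s := Finset.univ) (f := 0) (g := w)
    (by simp [hw.2])
  have : ∑ j, w j * a j < ∑ j, w j :=
    Finset.sum_lt_sum (fun j _ ↦ mul_le_of_le_one_right (hw.1 j) (ha j))
      ⟨j₀, Finset.mem_univ _, mul_lt_of_lt_one_right hj₀ (lt_of_le_of_ne (ha j₀) (hne j₀))⟩
  rw [h, hw.2] at this
  exact lt_irrefl _ this

theorem exists_perm_eq_single_of_forall_exists_apply_eq_one [DecidableEq ι] {v : ι → ι → 𝕜}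
    (hv : ∀ j, v j ∈ stdSimplex 𝕜 ι) (h : ∀ i, ∃ j, v j i = 1) :
    ∃ σ : Equiv.Perm ι, ∀ i, v (σ i) = Pi.single i 1 := by
  choose f hf using h
  have hvf : ∀ i, v (f i) = Pi.single i 1 :=
    fun i ↦ eq_single_of_mem_stdSimplex_of_apply_eq_one (hv _) (hf i)
  have hinj : Function.Injective f := fun i i' hii' ↦ by
    by_contra hne
    have := hf i
    rw [hii', hvf i', Pi.single_eq_of_ne hne] at this
    exact zero_ne_one this
  exact ⟨Equiv.ofBijective f hinj.bijective_of_finite, hvf⟩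

end stdSimplex

theorem eq_sum_smul_of_map_eq {R V W X ι : Type*} [CommSemiring R] [AddCommMonoid V]
    [Module R V] [AddCommMonoid W] [Module R W] [Fintype ι] [DecidableEq ι]
    {F : V →ₗ[R] W} (hF : Function.Injective F) (G : (ι → R) →ₗ[R] W)
    {p : X → V} {q : X → ι → R} (hpq : ∀ x, F (p x) = G (q x))
    {y : ι → X} (hy : ∀ j, q (y j) = Pi.single j 1) (x : X) :
    p x = ∑ j, q x j • p (y j) := by
  apply hF
  conv_lhs => rw [hpq, pi_eq_sum_univ' (q x)]
  simp only [map_sum, map_smul, hpq, hy]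

theorem full_identifiability_general
    (n_z n_s : ℕ)
    (𝒳 : Type*)
    (p q : 𝒳 → Fin n_z → ℝ)
    (hp_nonneg : ∀ x i, 0 ≤ p x i) (hp_sum : ∀ x, ∑ i, p x i = 1)
    (hq_nonneg : ∀ x i, 0 ≤ q x i) (hq_sum : ∀ x, ∑ i, q x i = 1)
    (MP MQ : Matrix (Fin n_z) (Fin n_s) ℝ)
    (hMP_rank : MP.rank = n_z)
    (hobs : ∀ x, MP.transpose *ᵥ p x = MQ.transpose *ᵥ q x)
    (hoverlap_p : ∀ i, ∃ x, p x i = 1)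
    (hoverlap_q : ∀ i, ∃ x, q x i = 1) :
    ∃ π : Equiv.Perm (Fin n_z), ∀ i : Fin n_z, ∀ x : 𝒳,
      p x i = q x (π i) := by
  have hpΔ : ∀ x, p x ∈ stdSimplex ℝ (Fin n_z) := fun x ↦ ⟨hp_nonneg x, hp_sum x⟩
  have hqΔ : ∀ x, q x ∈ stdSimplex ℝ (Fin n_z) := fun x ↦ ⟨hq_nonneg x, hq_sum x⟩
  choose xp hxp using hoverlap_p
  choose xq hxq using hoverlap_q
  have hmix : ∀ x, p x = ∑ j, q x j • p (xq j) :=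
    eq_sum_smul_of_map_eq (F := MP.vecMulLinear) (G := MQ.vecMulLinear)
      (vecMul_injective_of_rank_eq_card (by simpa using hMP_rank))
      (fun x ↦ by simpa [mulVec_transpose] using hobs x)
      (fun j ↦ eq_single_of_mem_stdSimplex_of_apply_eq_one (hqΔ _) (hxq j))
  have hvertex : ∀ i, ∃ j, p (xq j) i = 1 := fun i ↦
    exists_eq_one_of_sum_mul_eq_one (hqΔ (xp i))
      (fun j ↦ (mem_Icc_of_mem_stdSimplex (hpΔ _) i).2)
      (by simpa [hxp i] using (congrFun (hmix (xp i)) i).symm)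
  obtain ⟨σ, hσ⟩ :=
    exists_perm_eq_single_of_forall_exists_apply_eq_one (fun j ↦ hpΔ (xq j)) hvertex
  refine ⟨σ, fun i x ↦ ?_⟩
  rw [hmix x, ← Equiv.sum_comp σ]
  simp [hσ, Pi.single_apply]

/-- **Corollary 1 (Full identifiability).**
If two latent-variable models `(p, M_P)` and `(q, M_Q)` induce the same observed
conditional distribution of the proxy given the covariates, and both satisfy the
weak overlap assumption with parameter `η = 1` (for each latent class there is a
point where its posterior equals 1), then their posteriors agree exactly up to a
permutation of latent classes. -/
theorem full_identifiability
    (n_z n_s : ℕ) (hnz : 1 ≤ n_z) (hns : n_z ≤ n_s)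
    (𝒳 : Type*) [Nonempty 𝒳]
    (p q : 𝒳 → Fin n_z → ℝ)
    (hp_nonneg : ∀ x i, 0 ≤ p x i) (hp_sum : ∀ x, ∑ i, p x i = 1)
    (hq_nonneg : ∀ x i, 0 ≤ q x i) (hq_sum : ∀ x, ∑ i, q x i = 1)
    (MP MQ : Matrix (Fin n_z) (Fin n_s) ℝ)
    (hMP_nonneg : ∀ z s, 0 ≤ MP z s) (hMP_rowsum : ∀ z, ∑ s, MP z s = 1)
    (hMQ_nonneg : ∀ z s, 0 ≤ MQ z s) (hMQ_rowsum : ∀ z, ∑ s, MQ z s = 1)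
    (hMP_rank : MP.rank = n_z) (hMQ_rank : MQ.rank = n_z)
    (hobs : ∀ x, MP.transpose *ᵥ p x = MQ.transpose *ᵥ q x)
    (hoverlap_p : ∀ i, ∃ x, p x i = 1)
    (hoverlap_q : ∀ i, ∃ x, q x i = 1) :
    ∃ π : Equiv.Perm (Fin n_z), ∀ i : Fin n_z, ∀ x : 𝒳,
      p x i = q x (π i) :=
  full_identifiability_general n_z n_s 𝒳 p q hp_nonneg hp_sum hq_nonneg hq_sum MP MQ hMP_rank hobs
    hoverlap_p hoverlap_q
end

section
/- Let n_z, n_s ≥ 1 and let 𝒳 be a nonempty set. Let M*, M ∈ ℝ^{n_z × n_s} be row-stochastic matrices and let φ*, φ : 𝒳 → ℝ^{n_z} be functions whose values are probability vectors, satisfying (M*)^⊤ φ*(x) = M^⊤ φ(x) for all x ∈ 𝒳 (both pairs reproduce the same observed conditional distribution of the proxy given the covariates). Suppose that for each i ∈ {1,…,n_z} there exists x ∈ 𝒳 with φ*(x) equal to the i-th standard basis vector (i.e., φ*_i(x) = 1). Define, for a matrix N ∈ ℝ^{n_z × n_s}, the regularizer L_var(N) = max_{z ∈ {1,…,n_z}}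 (1/n_s) Σ_{s=1}^{n_s} (N_{zs} − 1/n_s)². Then L_var(M*) ≤ L_var(M). -/
/-!
Under overlap, row `z` of `M*` equals `(M*)ᵀ e_z = Mᵀ φ(x)` for some `x`, i.e. a convex
combination of the rows of `M`. The row variance is a convex function of the row, so by the
maximum principle it is at most the variance of some row of `M`.
-/

open Matrix

/-- The variance regularizer: the maximum over rows `z` of the (population)
variance of the row `N z` of a matrix `N ∈ ℝ^{n_z × n_s}`, i.e.
`L_var(N) = max_z (1/n_s) Σ_s (N_{zs} − 1/n_s)²`. -/
noncomputable def Lvar {n_z n_s : ℕ} (hnz : 0 < n_z)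
    (N : Matrix (Fin n_z) (Fin n_s) ℝ) : ℝ :=
  Finset.univ.sup' (Finset.univ_nonempty_iff.mpr (Fin.pos_iff_nonempty.mp hnz))
    (fun z => (1 / (n_s : ℝ)) * ∑ s, (N z s - 1 / (n_s : ℝ)) ^ 2)

theorem convexOn_sq_sub_apply {ι : Type*} (c : ℝ) (s : ι) :
    ConvexOn ℝ Set.univ fun v : ι → ℝ => (v s - c) ^ 2 := by
  have h := ((Even.convexOn_pow (𝕜 := ℝ) even_two).comp_linearMap
    (LinearMap.proj (R := ℝ) (φ := fun _ : ι => ℝ) s)).translate_right fun _ => -c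
  simpa [Function.comp_def, neg_add_eq_sub] using h

theorem convexOn_sum_sq_sub {ι : Type*} [Fintype ι] (c : ℝ) :
    ConvexOn ℝ Set.univ fun v : ι → ℝ => ∑ s, (v s - c) ^ 2 := by
  have h := Finset.sum_induction (s := Finset.univ) (fun s (v : ι → ℝ) => (v s - c) ^ 2)
    (ConvexOn ℝ Set.univ) (fun _ _ => ConvexOn.add) (convexOn_const 0 convex_univ)
    (fun s _ => convexOn_sq_sub_apply c s)
  rwa [Finset.sum_fn] at h

noncomputable def rowVariance {n : ℕ} (v : Fin n → ℝ) : ℝ :=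
  (1 / (n : ℝ)) * ∑ s, (v s - 1 / (n : ℝ)) ^ 2

theorem convexOn_rowVariance (n : ℕ) : ConvexOn ℝ Set.univ (rowVariance (n := n)) :=
  (convexOn_sum_sq_sub _).smul (by positivity)

theorem Lvar_le_of_row_mem_convexHull {n_z n_s : ℕ} (hnz : 0 < n_z)
    {N N' : Matrix (Fin n_z) (Fin n_s) ℝ} (h : ∀ z, N z ∈ convexHull ℝ (Set.range N')) :
    Lvar hnz N ≤ Lvar hnz N' := by
  refine Finset.sup'_le _ _ fun z _ => ?_
  obtain ⟨_, ⟨i, rfl⟩, hi⟩ :=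
    (convexOn_rowVariance n_s).exists_ge_of_mem_convexHull (Set.subset_univ _) (h z)
  exact hi.trans (Finset.le_sup' (fun z => rowVariance (N' z)) (Finset.mem_univ i))

theorem Matrix.transpose_mulVec_mem_convexHull {m n : Type*} [Fintype m]
    (A : Matrix m n ℝ) {w : m → ℝ} (hw₀ : ∀ i, 0 ≤ w i) (hw₁ : ∑ i, w i = 1) :
    Aᵀ *ᵥ w ∈ convexHull ℝ (Set.range A) := by
  rw [mulVec_transpose, vecMul_eq_sum]
  exact (convex_convexHull ℝ _).sum_mem (fun i _ => hw₀ i) hw₁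
    fun i _ => subset_convexHull ℝ _ (Set.mem_range_self i)

theorem regularizer_minimized_general
    (n_z n_s : ℕ) (hnz : 0 < n_z)
    (𝒳 : Type*)
    (Mstar M : Matrix (Fin n_z) (Fin n_s) ℝ)
    (φstar φ : 𝒳 → Fin n_z → ℝ)
    (hφ_nonneg : ∀ x i, 0 ≤ φ x i) (hφ_sum : ∀ x, ∑ i, φ x i = 1)
    (hobs : ∀ x, Mstar.transpose *ᵥ φstar x = M.transpose *ᵥ φ x)
    (hoverlap : ∀ i : Fin n_z, ∃ x, φstar x = Pi.single i 1) :
    Lvar hnz Mstar ≤ Lvar hnz M := by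
  refine Lvar_le_of_row_mem_convexHull hnz fun z => ?_
  obtain ⟨x, hx⟩ := hoverlap z
  have hrow : Mstar z = Mᵀ *ᵥ φ x := by
    rw [← hobs x, hx, mulVec_transpose, single_one_vecMul, row]
  exact hrow ▸ M.transpose_mulVec_mem_convexHull (hφ_nonneg x) (hφ_sum x)

/-- **Theorem 2.** Among all factorizations `(M, φ)` reproducing the same observed
conditional distribution of the proxy given the covariates, a factorization
`(M*, φ*)` satisfying the weak overlap assumption with `η = 1` (for each latent
class `i` there is a point `x` where `φ*(x)` is the `i`-th standard basis vector)
minimizes the maximum row variance `L_var`. -/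
theorem regularizer_minimized
    (n_z n_s : ℕ) (hnz : 0 < n_z) (hns : 0 < n_s)
    (𝒳 : Type*) [Nonempty 𝒳]
    (Mstar M : Matrix (Fin n_z) (Fin n_s) ℝ)
    (hMstar_nonneg : ∀ z s, 0 ≤ Mstar z s) (hMstar_rowsum : ∀ z, ∑ s, Mstar z s = 1)
    (hM_nonneg : ∀ z s, 0 ≤ M z s) (hM_rowsum : ∀ z, ∑ s, M z s = 1)
    (φstar φ : 𝒳 → Fin n_z → ℝ)
    (hφstar_nonneg : ∀ x i, 0 ≤ φstar x i) (hφstar_sum : ∀ x, ∑ i, φstar x i = 1)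
    (hφ_nonneg : ∀ x i, 0 ≤ φ x i) (hφ_sum : ∀ x, ∑ i, φ x i = 1)
    (hobs : ∀ x, Mstar.transpose *ᵥ φstar x = M.transpose *ᵥ φ x)
    (hoverlap : ∀ i : Fin n_z, ∃ x, φstar x = Pi.single i 1) :
    Lvar hnz Mstar ≤ Lvar hnz M :=
  regularizer_minimized_general n_z n_s hnz 𝒳 Mstar M φstar φ hφ_nonneg hφ_sum hobs hoverlap
end

section
/- Let n_z ≥ 1, n_s ≥ n_z, and let 𝒳 be a nonempty set. Let M ∈ ℝ^{n_z × n_s} be a row-stochastic matrix of rank n_z, and let p : 𝒳 → ℝ^{n_z} be a function whose values are probability vectors, such that for each i ∈ {1,…,n_z} there exists x ∈ 𝒳 with p_i(x) > 1/2. Then the linear span of the set { M^⊤ p(x) : x ∈ 𝒳 } ⊆ ℝ^{n_s} has dimension exactly n_z. -/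
/-!
Choosing for each class `i` a point `xᵢ` with `p_i(xᵢ) > 1/2` gives a matrix with rows
`p(xᵢ)` that is strictly diagonally dominant (each row is a probability vector), hence
invertible, so the posteriors `p(x)` span all of `ℝ^{n_z}`. The observed conditionals are
their image under `Mᵀ`, so they span the range of `Mᵀ`, of dimension `rank M = n_z`.
-/

open Matrix

theorem sum_erase_norm_lt_of_mem_stdSimplex {ι : Type*} [Fintype ι] [DecidableEq ι]
    {v : ι → ℝ} (hv : v ∈ stdSimplex ℝ ι) {k : ι} (hk : 1 / 2 < v k) :
    ∑ j ∈ Finset.univ.erase k, ‖v j‖ < ‖v k‖ := by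
  have hrest : ∑ j ∈ Finset.univ.erase k, v j = 1 - v k := by
    rw [← hv.2, ← Finset.add_sum_erase _ _ (Finset.mem_univ k), add_sub_cancel_left]
  calc ∑ j ∈ Finset.univ.erase k, ‖v j‖ = 1 - v k := by
        rw [← hrest]
        exact Finset.sum_congr rfl fun j _ => Real.norm_of_nonneg (hv.1 j)
    _ < v k := by linarith
    _ ≤ ‖v k‖ := Real.le_norm_self _

theorem Matrix.det_ne_zero_of_rows_mem_stdSimplex {n : Type*} [Fintype n] [DecidableEq n]
    {A : Matrix n n ℝ} (hA : ∀ i, A i ∈ stdSimplex ℝ n) (hdiag : ∀ i, 1 / 2 < A i i) :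
    A.det ≠ 0 :=
  det_ne_zero_of_sum_row_lt_diag fun k => sum_erase_norm_lt_of_mem_stdSimplex (hA k) (hdiag k)

theorem span_range_eq_top_of_forall_exists_half_lt {X n : Type*} [Fintype n]
    {p : X → n → ℝ} (hp : ∀ x, p x ∈ stdSimplex ℝ n) (hoverlap : ∀ i, ∃ x, 1 / 2 < p x i) :
    Submodule.span ℝ (Set.range p) = ⊤ := by
  classical
  choose x hx using hoverlap
  let A : Matrix n n ℝ := Matrix.of fun i => p (x i)
  have hA : IsUnit A :=
    (isUnit_iff_isUnit_det A).2 (det_ne_zero_of_rows_mem_stdSimplex (fun i => hp (x i)) hx).isUnit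
  have hspanA : Submodule.span ℝ (Set.range A) = ⊤ :=
    (linearIndependent_rows_iff_isUnit.2 hA).span_eq_top_of_card_eq_finrank' (by simp)
  exact eq_top_iff.2 (hspanA ▸ Submodule.span_mono (Set.range_comp_subset_range x p))

theorem Matrix.finrank_span_range_mulVec_of_span_eq_top {X m n R : Type*} [Field R]
    [Fintype n] (B : Matrix m n R) {v : X → n → R}
    (hv : Submodule.span R (Set.range v) = ⊤) :
    Module.finrank R (Submodule.span R (Set.range fun x => B *ᵥ v x)) = B.rank := by
  rw [show (Set.range fun x => B *ᵥ v x) = B.mulVecLin '' Set.range v from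
      Set.range_comp B.mulVecLin v,
    ← Submodule.map_span, hv, Submodule.map_top]
  rfl

theorem span_of_observed_conditionals_dim_general
    (n_z n_s : ℕ)
    (𝒳 : Type*)
    (M : Matrix (Fin n_z) (Fin n_s) ℝ)
    (hM_rank : M.rank = n_z)
    (p : 𝒳 → Fin n_z → ℝ)
    (hp_nonneg : ∀ x i, 0 ≤ p x i) (hp_sum : ∀ x, ∑ i, p x i = 1)
    (hoverlap : ∀ i : Fin n_z, ∃ x, 1 / 2 < p x i) :
    Module.finrank ℝ
      (Submodule.span ℝ (Set.range fun x : 𝒳 => M.transpose *ᵥ p x)) = n_z := by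
  have hp : ∀ x, p x ∈ stdSimplex ℝ (Fin n_z) := fun x => ⟨hp_nonneg x, hp_sum x⟩
  rw [Mᵀ.finrank_span_range_mulVec_of_span_eq_top
      (span_range_eq_top_of_forall_exists_half_lt hp hoverlap), rank_transpose, hM_rank]

/-- **Step 1 of Theorem 1: the observed conditionals span a space of dimension
`n_z`.** If `M` is a full-rank row-stochastic matrix and the posteriors `p(x)`
satisfy weak overlap (for each latent class `i` there is `x` with `p_i(x) > 1/2`),
then the span of the observed conditional distributions `{Mᵀ p(x) : x ∈ 𝒳}` has
dimension exactly `n_z`. -/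
theorem span_of_observed_conditionals_dim
    (n_z n_s : ℕ) (hnz : 1 ≤ n_z) (hns : n_z ≤ n_s)
    (𝒳 : Type*) [Nonempty 𝒳]
    (M : Matrix (Fin n_z) (Fin n_s) ℝ)
    (hM_nonneg : ∀ z s, 0 ≤ M z s) (hM_rowsum : ∀ z, ∑ s, M z s = 1)
    (hM_rank : M.rank = n_z)
    (p : 𝒳 → Fin n_z → ℝ)
    (hp_nonneg : ∀ x i, 0 ≤ p x i) (hp_sum : ∀ x, ∑ i, p x i = 1)
    (hoverlap : ∀ i : Fin n_z, ∃ x, 1 / 2 < p x i) :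
    Module.finrank ℝ
      (Submodule.span ℝ (Set.range fun x : 𝒳 => M.transpose *ᵥ p x)) = n_z :=
  span_of_observed_conditionals_dim_general n_z n_s 𝒳 M hM_rank p hp_nonneg hp_sum hoverlap
end

section
/- Let m, k, n_s ≥ 1 and let 𝒳 be a nonempty set. Let M_P ∈ ℝ^{m × n_s} be a row-stochastic matrix of rank m, and let p : 𝒳 → ℝ^m be a function whose values are probability vectors and such that for each i ∈ {1,…,m} there exists x ∈ 𝒳 with p_i(x) > 1/2. Let M_Q ∈ ℝ^{k × n_s} be any row-stochastic matrix and q : 𝒳 → ℝ^k any function whose values are probability vectors, such that M_P^⊤ p(x) = M_Q^⊤ q(x) for all x ∈ 𝒳. Then k ≥ m. -/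
/-!
By weak overlap, pick for each class `i` a point `xᵢ` with `p(xᵢ)ᵢ > 1/2`. Stacking the observation
identity over these points gives `P * M_P = Q * M_Q`, where the rows of `P` are the probability
vectors `p(xᵢ)`. Each diagonal entry of `P` exceeds the sum `1 - Pᵢᵢ` of the rest of its row, so
`P` is strictly diagonally dominant and therefore invertible. Hence
`m = rank M_P = rank (Q * M_Q) ≤ rank M_Q ≤ k`.
-/

open Matrix

theorem Matrix.det_ne_zero_of_rowStochastic_of_half_lt_diag {n : Type*} [Fintype n]
    [DecidableEq n] (A : Matrix n n ℝ) (h_nonneg : ∀ i j, 0 ≤ A i j)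
    (h_sum : ∀ i, ∑ j, A i j = 1) (h_diag : ∀ i, 1 / 2 < A i i) : A.det ≠ 0 := by
  refine det_ne_zero_of_sum_row_lt_diag fun i => ?_
  have h_off : ∑ j ∈ Finset.univ.erase i, ‖A i j‖ = 1 - A i i := by
    simp_rw [Real.norm_of_nonneg (h_nonneg i _)]
    rw [Finset.sum_erase_eq_sub (Finset.mem_univ i), h_sum]
  rw [h_off, Real.norm_of_nonneg (h_nonneg i i)]
  linarith [h_diag i]

theorem Matrix.rank_le_card_of_isUnit_det_mul_eq {R m n κ : Type*} [Field R] [Fintype m]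
    [DecidableEq m] [Fintype n] [Fintype κ] {P : Matrix m m R} {B : Matrix m n R}
    {Q : Matrix m κ R} {C : Matrix κ n R} (hP : IsUnit P.det) (h : P * B = Q * C) :
    B.rank ≤ Fintype.card κ :=
  calc B.rank = (P * B).rank := (rank_mul_eq_right_of_isUnit_det P B hP).symm
    _ = (Q * C).rank := by rw [h]
    _ ≤ C.rank := rank_mul_le_right Q C
    _ ≤ Fintype.card κ := rank_le_card_height C

theorem alternative_model_needs_at_least_as_many_classes_general
    (m k n_s : ℕ)
    (𝒳 : Type*)
    (MP : Matrix (Fin m) (Fin n_s) ℝ)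
    (hMP_rank : MP.rank = m)
    (p : 𝒳 → Fin m → ℝ)
    (hp_nonneg : ∀ x i, 0 ≤ p x i) (hp_sum : ∀ x, ∑ i, p x i = 1)
    (hoverlap : ∀ i : Fin m, ∃ x, 1 / 2 < p x i)
    (MQ : Matrix (Fin k) (Fin n_s) ℝ)
    (q : 𝒳 → Fin k → ℝ)
    (hobs : ∀ x, MP.transpose *ᵥ p x = MQ.transpose *ᵥ q x) :
    m ≤ k := by
  choose xs hxs using hoverlap
  have hdet : (of (p ∘ xs)).det ≠ 0 :=
    det_ne_zero_of_rowStochastic_of_half_lt_diag _ (fun i => hp_nonneg (xs i))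
      (fun i => hp_sum (xs i)) hxs
  have hstack : of (p ∘ xs) * MP = of (q ∘ xs) * MQ := funext fun i =>
    (mulVec_transpose MP _).symm.trans <| (hobs (xs i)).trans (mulVec_transpose MQ _)
  simpa [hMP_rank] using rank_le_card_of_isUnit_det_mul_eq hdet.isUnit hstack

/-- **Lower bound on the number of latent classes.** If a full-rank row-stochastic
model `(p, M_P)` with `m` latent classes satisfies weak overlap and another
row-stochastic model `(q, M_Q)` with `k` latent classes reproduces the same
observed conditional distribution `M_Pᵀ p(x) = M_Qᵀ q(x)` for all `x`, then
`k ≥ m`. -/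
theorem alternative_model_needs_at_least_as_many_classes
    (m k n_s : ℕ) (hm : 1 ≤ m) (hk : 1 ≤ k) (hns : 1 ≤ n_s)
    (𝒳 : Type*) [Nonempty 𝒳]
    (MP : Matrix (Fin m) (Fin n_s) ℝ)
    (hMP_nonneg : ∀ z s, 0 ≤ MP z s) (hMP_rowsum : ∀ z, ∑ s, MP z s = 1)
    (hMP_rank : MP.rank = m)
    (p : 𝒳 → Fin m → ℝ)
    (hp_nonneg : ∀ x i, 0 ≤ p x i) (hp_sum : ∀ x, ∑ i, p x i = 1)
    (hoverlap : ∀ i : Fin m, ∃ x, 1 / 2 < p x i)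
    (MQ : Matrix (Fin k) (Fin n_s) ℝ)
    (hMQ_nonneg : ∀ z s, 0 ≤ MQ z s) (hMQ_rowsum : ∀ z, ∑ s, MQ z s = 1)
    (q : 𝒳 → Fin k → ℝ)
    (hq_nonneg : ∀ x i, 0 ≤ q x i) (hq_sum : ∀ x, ∑ i, q x i = 1)
    (hobs : ∀ x, MP.transpose *ᵥ p x = MQ.transpose *ᵥ q x) :
    m ≤ k :=
  alternative_model_needs_at_least_as_many_classes_general m k n_s 𝒳 MP hMP_rank p hp_nonneg hp_sum
    hoverlap MQ q hobs
end

section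
/- Let n ≥ 1, η ∈ (1/2, 1], and let 𝒳 be a nonempty set. Let p, q : 𝒳 → ℝ^n be functions whose values are probability vectors, and let A ∈ ℝ^{n × n} satisfy p(x) = A·q(x) for all x ∈ 𝒳. (a) If for each i ∈ {1,…,n} there exists x ∈ 𝒳 with q_i(x) ≥ η, then every entry of A satisfies |A_{ri} − 1/2| ≤ 1/(2(2η − 1)); equivalently, −(1−η)/(2η−1) ≤ A_{ri} ≤ 1 + (1−η)/(2η−1) for all r, i. (b) If moreover, for a given row r, there exists x ∈ 𝒳 with p_r(x) ≥ η, then max_{1 ≤ i ≤ n} A_{ri} ≥ η. -/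
open Matrix

/-- **Entry-wise bounds on the mixing matrix `A` (Theorem 1, Step 2 constraints).**
If the probability-vector-valued functions `p` and `q` satisfy `p(x) = A q(x)` for
all `x`, and for each `i` there is `x` with `q_i(x) ≥ η` (`η ∈ (1/2, 1]`), then
(a) every entry satisfies `|A_{ri} − 1/2| ≤ 1/(2(2η−1))`, equivalently
`−(1−η)/(2η−1) ≤ A_{ri} ≤ 1 + (1−η)/(2η−1)`, and
(b) if additionally there is `x` with `p_r(x) ≥ η` for a row `r`, then the
maximum entry of that row is at least `η`. -/
theorem mixing_matrix_entry_bounds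
    (n : ℕ) (hn : 1 ≤ n) (η : ℝ) (hη1 : 1 / 2 < η) (hη2 : η ≤ 1)
    (𝒳 : Type*) [Nonempty 𝒳]
    (p q : 𝒳 → Fin n → ℝ)
    (hp_nonneg : ∀ x i, 0 ≤ p x i) (hp_sum : ∀ x, ∑ i, p x i = 1)
    (hq_nonneg : ∀ x i, 0 ≤ q x i) (hq_sum : ∀ x, ∑ i, q x i = 1)
    (A : Matrix (Fin n) (Fin n) ℝ)
    (hA : ∀ x, p x = A *ᵥ q x)
    (hoverlap_q : ∀ i, ∃ x, η ≤ q x i) :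
    (∀ r i, |A r i - 1 / 2| ≤ 1 / (2 * (2 * η - 1)) ∧
      -((1 - η) / (2 * η - 1)) ≤ A r i ∧ A r i ≤ 1 + (1 - η) / (2 * η - 1)) ∧
    (∀ r, (∃ x, η ≤ p x r) →
      η ≤ Finset.univ.sup'
        (Finset.univ_nonempty_iff.mpr (Fin.pos_iff_nonempty.mp hn))
        (fun i => A r i)) := by
  have hpos : (0:ℝ) < 2 * η - 1 := by linarith
  have hηpos : (0:ℝ) < η := by linarith
  have hne : (Finset.univ : Finset (Fin n)).Nonempty :=
    Finset.univ_nonempty_iff.mpr (Fin.pos_iff_nonempty.mp hn)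
  -- basic facts
  have hq_le_one : ∀ x i, q x i ≤ 1 := by
    intro x i
    calc q x i ≤ ∑ j, q x j :=
      Finset.single_le_sum (fun j _ => hq_nonneg x j) (Finset.mem_univ i)
    _ = 1 := hq_sum x
  have hp_le_one : ∀ x i, p x i ≤ 1 := by
    intro x i
    calc p x i ≤ ∑ j, p x j :=
      Finset.single_le_sum (fun j _ => hp_nonneg x j) (Finset.mem_univ i)
    _ = 1 := hp_sum x
  have hpx : ∀ x (r : Fin n), p x r = ∑ j, A r j * q x j := by
    intro x r
    rw [hA x]
    simp [Matrix.mulVec, dotProduct]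
  -- per-row bounds
  have key : ∀ r : Fin n,
      (Finset.univ.sup' hne (fun i => A r i) * (2 * η - 1) ≤ η) ∧
      (-(1 - η) ≤ Finset.univ.inf' hne (fun i => A r i) * (2 * η - 1)) ∧
      (0 ≤ Finset.univ.sup' hne (fun i => A r i)) := by
    intro r
    set M := Finset.univ.sup' hne (fun i => A r i) with hM
    set m := Finset.univ.inf' hne (fun i => A r i) with hm
    have hmM : ∀ i, m ≤ A r i ∧ A r i ≤ M := fun i =>
      ⟨Finset.inf'_le _ (Finset.mem_univ i), Finset.le_sup' _ (Finset.mem_univ i)⟩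
    -- ∀ x, p x r ≤ M and M ≥ 0
    have hub : ∀ x, p x r ≤ M := by
      intro x
      rw [hpx]
      calc ∑ j, A r j * q x j ≤ ∑ j, M * q x j :=
        Finset.sum_le_sum (fun j _ =>
          mul_le_mul_of_nonneg_right (hmM j).2 (hq_nonneg x j))
      _ = M := by rw [← Finset.mul_sum, hq_sum, mul_one]
    have hM0 : 0 ≤ M := by
      obtain ⟨x⟩ := ‹Nonempty 𝒳›
      exact le_trans (hp_nonneg x r) (hub x)
    -- split lemma
    have hsplit : ∀ x (i : Fin n),
        p x r = A r i * q x i + ∑ j ∈ Finset.univ.erase i, A r j * q x j := by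
      intro x i
      rw [hpx]
      exact (Finset.add_sum_erase _ _ (Finset.mem_univ i)).symm
    have herase_q : ∀ x (i : Fin n),
        ∑ j ∈ Finset.univ.erase i, q x j = 1 - q x i := by
      intro x i
      rw [Finset.sum_erase_eq_sub (Finset.mem_univ i), hq_sum]
    -- max index
    obtain ⟨i₁, -, hi₁⟩ := Finset.exists_mem_eq_sup' hne (fun i => A r i)
    obtain ⟨i₂, -, hi₂⟩ := Finset.exists_mem_eq_inf' hne (fun i => A r i)
    obtain ⟨x₁, ht₁⟩ := hoverlap_q i₁
    obtain ⟨x₂, ht₂⟩ := hoverlap_q i₂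
    -- lower bound on erase sum at x₁
    have hlow : m * (1 - q x₁ i₁) ≤ ∑ j ∈ Finset.univ.erase i₁, A r j * q x₁ j := by
      rw [← herase_q x₁ i₁, Finset.mul_sum]
      exact Finset.sum_le_sum (fun j _ =>
        mul_le_mul_of_nonneg_right (hmM j).1 (hq_nonneg x₁ j))
    have hineq1 : M * q x₁ i₁ + m * (1 - q x₁ i₁) ≤ 1 := by
      have := hsplit x₁ i₁
      have h1 := hp_le_one x₁ r
      rw [← hi₁] at this
      linarith
    -- upper bound on erase sum at x₂
    have hhigh : ∑ j ∈ Finset.univ.erase i₂, A r j * q x₂ j ≤ M * (1 - q x₂ i₂) := by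
      rw [← herase_q x₂ i₂, Finset.mul_sum]
      exact Finset.sum_le_sum (fun j _ =>
        mul_le_mul_of_nonneg_right (hmM j).2 (hq_nonneg x₂ j))
    have hineq2 : 0 ≤ m * q x₂ i₂ + M * (1 - q x₂ i₂) := by
      have := hsplit x₂ i₂
      have h0 := hp_nonneg x₂ r
      rw [← hi₂] at this
      linarith
    have hmleM : m ≤ M := (hmM i₁).1.trans (hmM i₁).2
    -- m η + M (1-η) ≥ 0
    have hkey2 : 0 ≤ m * η + M * (1 - η) := by
      nlinarith [mul_nonneg (sub_nonneg.mpr hmleM) (sub_nonneg.mpr ht₂)]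
    have hkey1 : M * (2 * η - 1) ≤ η := by
      nlinarith [mul_nonneg (sub_nonneg.mpr hmleM) (sub_nonneg.mpr ht₁),
        mul_nonneg hM0 (sub_nonneg.mpr (hq_le_one x₁ i₁))]
    refine ⟨hkey1, ?_, hM0⟩
    -- m (2η-1) ≥ -(1-η)
    nlinarith [mul_nonneg hM0 (sub_nonneg.mpr hη2)]
  constructor
  · intro r i
    obtain ⟨h1, h2, h3⟩ := key r
    have hiM : A r i ≤ Finset.univ.sup' hne (fun i => A r i) :=
      Finset.le_sup' _ (Finset.mem_univ i)
    have him : Finset.univ.inf' hne (fun i => A r i) ≤ A r i :=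
      Finset.inf'_le _ (Finset.mem_univ i)
    have hupper : A r i ≤ 1 + (1 - η) / (2 * η - 1) := by
      have : A r i * (2 * η - 1) ≤ η := by nlinarith
      rw [show (1:ℝ) + (1 - η) / (2 * η - 1) = η / (2 * η - 1) by
          rw [eq_div_iff hpos.ne', add_mul, div_mul_cancel₀ _ hpos.ne']; ring,
        le_div_iff₀ hpos]
      linarith
    have hlower : -((1 - η) / (2 * η - 1)) ≤ A r i := by
      rw [show -((1 - η) / (2 * η - 1)) = (-(1 - η)) / (2 * η - 1) by ring,
        div_le_iff₀ hpos]
      nlinarith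
    refine ⟨?_, hlower, hupper⟩
    rw [abs_le]
    constructor
    · have e2 : (1:ℝ)/2 - 1 / (2 * (2 * η - 1)) = -((1 - η) / (2 * η - 1)) := by
        field_simp; ring
      linarith
    · have e1 : (1:ℝ)/2 + 1 / (2 * (2 * η - 1)) = 1 + (1 - η) / (2 * η - 1) := by
        field_simp; ring
      linarith
  · rintro r ⟨x, hx⟩
    have hub : p x r ≤ Finset.univ.sup' hne (fun i => A r i) := by
      rw [hpx]
      calc ∑ j, A r j * q x j ≤ ∑ j, Finset.univ.sup' hne (fun i => A r i) * q x j :=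
        Finset.sum_le_sum (fun j _ =>
          mul_le_mul_of_nonneg_right (Finset.le_sup' _ (Finset.mem_univ j)) (hq_nonneg x j))
      _ = _ := by rw [← Finset.mul_sum, hq_sum, mul_one]
    exact hx.trans hub
end
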